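/- arXiv:1701.07206 — 2 statements merged into one kernel-verified Lean document; each statement's English description precedes it below -/
import Mathlib

section
/- Let q be a prime power, s ≥ 2, and d an integer with 0 ≤ d ≤ q−1, and set K = ⌊q/(d+1)⌋^{s−1}. Then there exist K subsets A^{(1)},…,A^{(K)} ⊆ 𝔽_q^s, each of size (d+1)^{s−1}, such that: (a) each A^{(j)} is an interpolation set for homogeneous polynomials of degree d, i.e., any two homogeneous polynomials of degree d over 𝔽_q in s variables that agree on A^{(j)} agree on all of 𝔽_q^s; and (b) the sets are mutually disjoint under multiplication, i.e., for all j ≠ j', every u ∈ A^{(j)} and every α ∈ 𝔽_q ∖ {0}, the point α·u does not belong to A^{(j')}. -/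
/-!
Split `𝔽_q` into `⌊q/(d+1)⌋` disjoint blocks of size `d + 1`. For each choice `c` of one block
per coordinate, take the grid `{1} × ∏ᵢ B_{c i}`. A homogeneous polynomial `p` of degree `d` is
determined by its dehomogenization `p(1, t)`, whose degree is at most `d`; the latter vanishes
on a grid with sides of size `d + 1` only if it is zero (Combinatorial Nullstellensatz). Two
grids are disjoint under multiplication because their first coordinate is `1`, which forces the
scalar to be `1`, and distinct blocks are disjoint.
-/

open MvPolynomial Finset

namespace MvPolynomial

variable {R : Type*} [CommRing R] {n d : ℕ}

noncomputable def dehomogenize (p : MvPolynomial (Fin (n + 1)) R) : MvPolynomial (Fin n) R :=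
  Polynomial.eval 1 (finSuccEquiv R n p)

lemma eval_dehomogenize (t : Fin n → R) (p : MvPolynomial (Fin (n + 1)) R) :
    eval t (dehomogenize p) = eval (Fin.cons 1 t) p := by
  rw [dehomogenize, eval_eq_eval_mv_eval', Polynomial.eval_one_map]

lemma dehomogenize_eq_sum (p : MvPolynomial (Fin (n + 1)) R) :
    dehomogenize p = ∑ i ∈ (finSuccEquiv R n p).support, (finSuccEquiv R n p).coeff i := by
  simp [dehomogenize, Polynomial.eval_eq_sum, Polynomial.sum_def]

lemma totalDegree_dehomogenize_le (p : MvPolynomial (Fin (n + 1)) R) :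
    (dehomogenize p).totalDegree ≤ p.totalDegree := by
  rw [dehomogenize_eq_sum]
  exact totalDegree_finsetSum_le fun i hi => (Nat.le_add_right _ i).trans
    (totalDegree_coeff_finSuccEquiv_add_le p i (Polynomial.mem_support_iff.mp hi))

lemma coeff_dehomogenize (m : Fin n →₀ ℕ) (p : MvPolynomial (Fin (n + 1)) R) :
    coeff m (dehomogenize p) = ∑ i ∈ (finSuccEquiv R n p).support, coeff (m.cons i) p := by
  simp only [dehomogenize_eq_sum, coeff_sum, finSuccEquiv_coeff_coeff]

lemma _root_.Finsupp.degree_cons (k : ℕ) (m : Fin n →₀ ℕ) :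
    (m.cons k).degree = k + m.degree := by
  simp [Finsupp.degree_eq_sum, Fin.sum_univ_succ]

namespace IsHomogeneous

variable {p : MvPolynomial (Fin (n + 1)) R}

lemma coeff_tail_dehomogenize (hp : p.IsHomogeneous d) {a : Fin (n + 1) →₀ ℕ}
    (ha : a.degree = d) : coeff a.tail (dehomogenize p) = coeff a p := by
  rw [coeff_dehomogenize, sum_eq_single (a 0)]
  · rw [Finsupp.cons_tail]
  · intro i _ hi
    refine hp.coeff_eq_zero fun hdeg => hi ?_
    rw [← Finsupp.cons_tail a, Finsupp.degree_cons] at ha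
    rw [Finsupp.degree_cons] at hdeg
    omega
  · intro h
    rw [← finSuccEquiv_coeff_coeff, Polynomial.notMem_support_iff.mp h, coeff_zero]

lemma eq_zero_of_dehomogenize_eq_zero (hp : p.IsHomogeneous d) (h : dehomogenize p = 0) :
    p = 0 := by
  ext a
  by_cases ha : a.degree = d
  · rw [← hp.coeff_tail_dehomogenize ha, h, coeff_zero, coeff_zero]
  · rw [hp.coeff_eq_zero ha, coeff_zero]

lemma eq_zero_of_eval_cons_one_eq_zero [IsDomain R] (hp : p.IsHomogeneous d)
    (S : Fin n → Finset R) (hS : ∀ i, d < #(S i))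
    (h : ∀ t : Fin n → R, (∀ i, t i ∈ S i) → eval (Fin.cons 1 t) p = 0) : p = 0 := by
  refine hp.eq_zero_of_dehomogenize_eq_zero <|
    eq_zero_of_eval_zero_at_prod_finset _ S (fun i => ?_) fun t ht => ?_
  · calc degreeOf i (dehomogenize p) ≤ (dehomogenize p).totalDegree := degreeOf_le_totalDegree _ i
      _ ≤ p.totalDegree := totalDegree_dehomogenize_le p
      _ ≤ d := hp.totalDegree_le
      _ < #(S i) := hS i
  · rw [eval_dehomogenize, h t ht]

end IsHomogeneous

end MvPolynomial

section BlockGrid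

variable {F ι κ : Type*} [Fintype κ] (E : ι × κ ↪ F)

def block (a : ι) : Finset F :=
  univ.map ((Function.Embedding.sectR a κ).trans E)

lemma card_block (a : ι) : #(block E a) = Fintype.card κ := by
  simp [block]

lemma disjoint_block {a b : ι} (hab : a ≠ b) : Disjoint (block E a) (block E b) := by
  simp only [block, disjoint_left, mem_map, mem_univ, true_and,
    Function.Embedding.trans_apply, Function.Embedding.sectR_apply, not_exists,
    forall_exists_index, forall_apply_eq_imp_iff]
  intro y z h
  exact hab (Prod.ext_iff.mp (E.injective h)).1.symm

variable [One F] {n : ℕ}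

/-- The points `(1, t)` of `F^(n+1)` with `t i` in the block `c i`. -/
def blockGrid (c : Fin n → ι) : Finset (Fin (n + 1) → F) :=
  (Fintype.piFinset fun i => block E (c i)).map ⟨Fin.cons 1, Fin.cons_right_injective 1⟩

lemma card_blockGrid (c : Fin n → ι) : #(blockGrid E c) = Fintype.card κ ^ n := by
  simp [blockGrid, card_block]

lemma cons_one_mem_blockGrid {c : Fin n → ι} {t : Fin n → F} (ht : ∀ i, t i ∈ block E (c i)) :
    Fin.cons 1 t ∈ blockGrid E c :=
  mem_map_of_mem _ (Fintype.mem_piFinset.mpr ht)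

end BlockGrid

lemma MvPolynomial.IsHomogeneous.eq_of_eqOn_blockGrid {F ι κ : Type*} [Fintype κ] [CommRing F]
    [IsDomain F] {n d : ℕ} {P Q : MvPolynomial (Fin (n + 1)) F}
    (hP : P.IsHomogeneous d) (hQ : Q.IsHomogeneous d) (E : ι × κ ↪ F) (c : Fin n → ι)
    (hd : d < Fintype.card κ) (h : ∀ a ∈ blockGrid E c, eval a P = eval a Q) : P = Q :=
  sub_eq_zero.mp <| (hP.sub hQ).eq_zero_of_eval_cons_one_eq_zero (fun i => block E (c i))
    (fun i => (card_block E (c i)).symm ▸ hd) fun t ht => by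
      rw [map_sub, h _ (cons_one_mem_blockGrid E ht), sub_self]

lemma eq_of_smul_mem_blockGrid {F ι κ : Type*} [Fintype κ] [Monoid F]
    {E : ι × κ ↪ F} {n : ℕ} {c c' : Fin n → ι} {u : Fin (n + 1) → F} {α : F}
    (hu : u ∈ blockGrid E c) (hα : α • u ∈ blockGrid E c') : c = c' := by
  simp only [blockGrid, mem_map, Fintype.mem_piFinset, Function.Embedding.coeFn_mk] at hu hα
  obtain ⟨t, ht, rfl⟩ := hu
  obtain ⟨t', ht', heq⟩ := hα
  have hα1 : α = 1 := by simpa using (congrFun heq 0).symm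
  subst hα1
  rw [one_smul] at heq
  have htt' : t' = t := Fin.cons_right_injective 1 heq
  subst htt'
  funext i
  by_contra hne
  exact disjoint_left.mp (disjoint_block E hne) (ht i) (ht' i)

theorem stmt1_general {F : Type*} [Field F] [Fintype F] (q s d : ℕ)
    (hcard : Fintype.card F = q) (hs : 2 ≤ s) :
    ∃ A : Fin ((q / (d + 1)) ^ (s - 1)) → Finset (Fin s → F),
      (∀ j, (A j).card = (d + 1) ^ (s - 1)) ∧
      (∀ j, ∀ P Q : MvPolynomial (Fin s) F, P.IsHomogeneous d → Q.IsHomogeneous d →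
        (∀ a ∈ A j, eval a P = eval a Q) → ∀ w : Fin s → F, eval w P = eval w Q) ∧
      (∀ j j', j ≠ j' → ∀ u ∈ A j, ∀ α : F, α ≠ 0 → α • u ∉ A j') := by
  obtain ⟨n, rfl⟩ : ∃ n, s = n + 1 := ⟨s - 1, by omega⟩
  obtain ⟨E⟩ : Nonempty (Fin (q / (d + 1)) × Fin (d + 1) ↪ F) :=
    Function.Embedding.nonempty_of_card_le <| by
      simpa [hcard] using Nat.div_mul_le_self q (d + 1)
  let c : Fin ((q / (d + 1)) ^ n) ≃ (Fin n → Fin (q / (d + 1))) := finFunctionFinEquiv.symm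
  refine ⟨fun j => blockGrid E (c j), fun j => ?_, fun j P Q hP hQ h w => ?_,
    fun j j' hjj' u hu α _ hα => ?_⟩
  · simp [card_blockGrid]
  · rw [hP.eq_of_eqOn_blockGrid hQ E (c j) (by simp) h]
  · exact hjj' (c.injective (eq_of_smul_mem_blockGrid hu hα))

/-- Let `q` be a prime power (realized as the cardinality of a finite field
`F`), `s ≥ 2`, `0 ≤ d ≤ q - 1`, and `K = ⌊q/(d+1)⌋^(s-1)`.  There exist `K` subsets of `F^s`,
each of size `(d+1)^(s-1)`, each an interpolation set for homogeneous polynomials of degree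
`d`, and mutually disjoint under multiplication. -/
theorem stmt1 {F : Type*} [Field F] [Fintype F] (q s d : ℕ)
    (hcard : Fintype.card F = q) (hs : 2 ≤ s) (hd : d ≤ q - 1) :
    ∃ A : Fin ((q / (d + 1)) ^ (s - 1)) → Finset (Fin s → F),
      (∀ j, (A j).card = (d + 1) ^ (s - 1)) ∧
      (∀ j, ∀ P Q : MvPolynomial (Fin s) F, P.IsHomogeneous d → Q.IsHomogeneous d →
        (∀ a ∈ A j, eval a P = eval a Q) → ∀ w : Fin s → F, eval w P = eval w Q) ∧
      (∀ j j', j ≠ j' → ∀ u ∈ A j, ∀ α : F, α ≠ 0 → α • u ∉ A j') :=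
  stmt1_general q s d hcard hs
end

section
/- For every real number ε ≥ 0.5 and every real τ > 0, there exist positive constants c_1, c_2 and an integer n_0 such that for every n ≥ n_0 there exists a binary k-batch code [N, n, k]^B with k ≥ c_1 · n^ε and length N ≤ c_2 · n^{0.5+ε+τ}. -/
/-!
The `q²` information symbols of the point–line code sit on the points of the affine plane `𝔽_q²`;
every non-vertical line adds one coordinate holding the sum over its points, so the length is
`2q²`. A point `p` can be read directly, or recovered from any line through it together with the
other points of that line, and a coordinate lies on such a line set through `p` for at most one
slope. Hence the requests for a point asked more than `k/2` times can be spread over the `q`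
slopes, and any `qk/8` requests are served using each coordinate at most `k` times. Replacing every
coordinate of this code by a block of a `k`-batch code turns this into a `qk/8`-batch code.
Starting from `8^d q` copies of one symbol and iterating `d` times gives a
`[8^d q (2q²)^d, q^{2d}, q^{d+1}]` batch code. With a prime `q ≈ n^{1/2d}` (Bertrand) and
`⌈n^{ε-1/2}⌉` copies of it one gets `k ≥ n^ε` and `N = O(n^{1/2+ε+1/2d})`.
-/

/-- There is an `[N,n,k]` batch code over the field `F`: a systematic injective `F`-linear
encoder `E : F^n → F^N` such that every multiset request of `k` information coordinates can
be answered by `k` pairwise disjoint recovering sets. -/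
def ExistsBatchCode (F : Type) [Field F] (N n k : ℕ) : Prop :=
  ∃ (h : n ≤ N) (E : (Fin n → F) →ₗ[F] (Fin N → F)),
    Function.Injective E ∧
    (∀ (x : Fin n → F) (i : Fin n), E x (Fin.castLE h i) = x i) ∧
    ∀ req : Fin k → Fin n, ∃ R : Fin k → Finset (Fin N),
      (∀ a b, a ≠ b → Disjoint (R a) (R b)) ∧
      ∀ a, ∀ x x' : Fin n → F, (∀ c ∈ R a, E x c = E x' c) → x (req a) = x' (req a)

open Finset Function

theorem Finset.exists_forall_card_fiber_le {α β : Type*} [Fintype β] [Nonempty β]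
    [DecidableEq β] (s : Finset α) :
    ∃ f : α → β, ∀ b, #{a ∈ s | f a = b} ≤ #s / Fintype.card β + 1 := by
  classical
  have hm : 0 < Fintype.card β := Fintype.card_pos
  let idx : α → ℕ := fun a => if h : a ∈ s then s.equivFin ⟨a, h⟩ else 0
  have idx_lt : ∀ a ∈ s, idx a < #s := fun a ha => by simp [idx, ha]
  have idx_injOn : Set.InjOn idx s := fun a ha a' ha' h => by
    simpa [idx, mem_coe.mp ha, mem_coe.mp ha', Fin.val_inj] using h
  let f : α → β := fun a => (Fintype.equivFin β).symm ⟨idx a % Fintype.card β, Nat.mod_lt _ hm⟩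
  refine ⟨f, fun b => ?_⟩
  have hmaps : ∀ a ∈ {a ∈ s | f a = b}, idx a / Fintype.card β ∈ range (#s / Fintype.card β + 1) :=
    fun a ha => mem_range_succ_iff.mpr (Nat.div_le_div_right (idx_lt a (mem_filter.mp ha).1).le)
  have hinj : Set.InjOn (fun a => idx a / Fintype.card β) ({a ∈ s | f a = b} : Finset α) := by
    intro a ha a' ha' h
    rw [mem_coe, mem_filter] at ha ha'
    have hmod : idx a % Fintype.card β = idx a' % Fintype.card β := by
      simpa [f] using ha.2.trans ha'.2.symm
    refine idx_injOn ha.1 ha'.1 ?_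
    rw [← Nat.div_add_mod (idx a) (Fintype.card β), ← Nat.div_add_mod (idx a') (Fintype.card β)]
    simp only at h
    rw [h, hmod]
  simpa using card_le_card_of_injOn _ hmaps hinj

theorem Finset.card_filter_lt_card_fiber_mul_le {α β : Type*} [Fintype α] [Fintype β]
    [DecidableEq β] (f : α → β) (t : ℕ) :
    #{b | t < #{a | f a = b}} * (t + 1) ≤ Fintype.card α :=
  calc #{b | t < #{a | f a = b}} * (t + 1)
      = ∑ b ∈ {b | t < #{a | f a = b}}, (t + 1) := by rw [sum_const, smul_eq_mul]
    _ ≤ ∑ b ∈ {b | t < #{a | f a = b}}, #{a | f a = b} :=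
        sum_le_sum fun b hb => (mem_filter.mp hb).2
    _ ≤ ∑ b, #{a | f a = b} := sum_le_sum_of_subset (subset_univ _)
    _ = Fintype.card α := (card_eq_sum_card_fiberwise fun _ _ => mem_univ _).symm

section Codes

variable {F : Type*} [Field F] {ι ι' κ κ' : Type*}

def IsRecoveringSet (E : (ι → F) →ₗ[F] (κ → F)) (R : Finset κ) (i : ι) : Prop :=
  ∀ x x' : ι → F, (∀ c ∈ R, E x c = E x' c) → x i = x' i

open scoped Classical in
def ServesWithLoad (E : (ι → F) →ₗ[F] (κ → F)) (K t : ℕ) : Prop :=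
  ∀ req : Fin K → ι, ∃ S : Fin K → Finset κ,
    (∀ c, #{a | c ∈ S a} ≤ t) ∧ ∀ a, IsRecoveringSet E (S a) (req a)

structure BatchCode (F : Type*) [Field F] (ι κ : Type*) (k : ℕ) where
  encode : (ι → F) →ₗ[F] (κ → F)
  embed : ι → κ
  encode_embed (x : ι → F) (i : ι) : encode x (embed i) = x i
  batch (req : Fin k → ι) : ∃ R : Fin k → Finset κ,
    Pairwise (Disjoint on R) ∧ ∀ a, IsRecoveringSet encode (R a) (req a)

namespace BatchCode

variable {P B : Type*} {k K : ℕ}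

def id (F : Type*) [Field F] (ι : Type*) : BatchCode F ι ι 1 where
  encode := LinearMap.id
  embed := _root_.id
  encode_embed _ _ := rfl
  batch req := ⟨fun a => {req a}, fun a b hab => absurd (Subsingleton.elim a b) hab,
    fun _ _ _ h => h _ (mem_singleton_self _)⟩

theorem embed_injective (C : BatchCode F ι κ k) : Injective C.embed := by
  classical
  intro i j hij
  by_contra hne
  have := C.encode_embed (Pi.single i 1) j
  rw [← hij, C.encode_embed] at this
  simp [Ne.symm hne] at this

theorem exists_recovering {α : Type*} (C : BatchCode F ι κ k) (A : Finset α) (hA : #A ≤ k)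
    (req : α → ι) : ∃ R : α → Finset κ,
      (A : Set α).PairwiseDisjoint R ∧ ∀ a ∈ A, IsRecoveringSet C.encode (R a) (req a) := by
  classical
  rcases A.eq_empty_or_nonempty with rfl | ⟨a₀, ha₀⟩
  · exact ⟨fun _ => ∅, by simp, by simp⟩
  let idx : A → Fin k := fun a => Fin.castLE hA (A.equivFin a)
  have idx_injective : Injective idx := fun a b h =>
    A.equivFin.injective (Fin.castLE_injective hA h)
  obtain ⟨R, hdisj, hrec⟩ := C.batch fun j =>
    if h : ∃ a, idx a = j then req h.choose else req a₀
  refine ⟨fun a => if h : a ∈ A then R (idx ⟨a, h⟩) else ∅, ?_, fun a ha => ?_⟩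
  · intro a ha b hb hab
    have hne : idx ⟨a, ha⟩ ≠ idx ⟨b, hb⟩ := idx_injective.ne fun h => hab (congrArg Subtype.val h)
    simpa [onFun, dif_pos (mem_coe.mp ha), dif_pos (mem_coe.mp hb)] using hdisj hne
  · have h : ∃ b, idx b = idx ⟨a, ha⟩ := ⟨_, rfl⟩
    have := hrec (idx ⟨a, ha⟩)
    rw [dif_pos h, idx_injective h.choose_spec] at this
    simpa [dif_pos ha] using this

def mono (C : BatchCode F ι κ k) {k' : ℕ} (h : k' ≤ k) : BatchCode F ι κ k' where
  __ := C
  batch req := by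
    obtain ⟨R, hdisj, hrec⟩ := C.exists_recovering univ (by simpa using h) req
    exact ⟨R, fun a b hab => hdisj (mem_univ a) (mem_univ b) hab, fun a => hrec a (mem_univ a)⟩

noncomputable def restrict (C : BatchCode F ι κ k) (f : ι' ↪ ι) : BatchCode F ι' κ k where
  encode := C.encode ∘ₗ ExtendByZero.linearMap F f
  embed := C.embed ∘ f
  encode_embed x i := by simp [C.encode_embed, f.injective.extend_apply]
  batch req := by
    obtain ⟨R, hdisj, hrec⟩ := C.batch (f ∘ req)
    refine ⟨R, hdisj, fun a x x' h => ?_⟩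
    simpa [f.injective.extend_apply] using hrec a _ _ h

def reindex (C : BatchCode F ι κ k) (e : κ ≃ κ') : BatchCode F ι κ' k where
  encode := LinearMap.funLeft F F e.symm ∘ₗ C.encode
  embed := e ∘ C.embed
  encode_embed x i := by simp [C.encode_embed]
  batch req := by
    obtain ⟨R, hdisj, hrec⟩ := C.batch req
    refine ⟨fun a => (R a).map e.toEmbedding, fun a b hab => ?_, fun a x x' h => ?_⟩
    · simpa [onFun] using hdisj hab
    · exact hrec a x x' fun c hc => by simpa using h (e c) (mem_map_of_mem _ hc)

def replicate (C : BatchCode F ι κ k) (M : ℕ) [NeZero M] :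
    BatchCode F ι (Fin M × κ) (M * k) where
  encode := LinearMap.funLeft F F Prod.snd ∘ₗ C.encode
  embed i := (0, C.embed i)
  encode_embed := C.encode_embed
  batch req := by
    choose R hdisj hrec using fun j : Fin M => C.batch fun i => req (finProdFinEquiv (j, i))
    let R' : Fin M × Fin k → Finset (Fin M × κ) := fun ji => (R ji.1 ji.2).map (.sectR ji.1 κ)
    refine ⟨R' ∘ finProdFinEquiv.symm, ?_, fun a x x' h => ?_⟩
    · refine Pairwise.comp_of_injective (r := Disjoint on R') (fun ji ji' hne => ?_)
        finProdFinEquiv.symm.injective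
      rw [onFun, disjoint_left]
      rintro ⟨j, c⟩ hc hc'
      simp only [R', mem_map, Embedding.sectR_apply, Prod.mk.injEq] at hc hc'
      obtain ⟨c₁, hc₁, rfl, rfl⟩ := hc
      obtain ⟨c₂, hc₂, hj, rfl⟩ := hc'
      have hi : ji.2 ≠ ji'.2 := fun hi => hne (Prod.ext hj.symm hi)
      exact disjoint_left.mp (hj ▸ hdisj ji.1 hi) hc₁ hc₂
    · obtain ⟨⟨j, i⟩, rfl⟩ := finProdFinEquiv.surjective a
      refine hrec j i x x' fun c hc => ?_
      simpa [R'] using h (j, c) (by simpa [R'] using hc)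

def tensorEncode (L : (P → F) →ₗ[F] (B → F)) (E : (ι → F) →ₗ[F] (κ → F)) :
    (P × ι → F) →ₗ[F] (B × κ → F) :=
  LinearMap.pi fun c => LinearMap.proj c.2 ∘ₗ E ∘ₗ
    LinearMap.pi fun i => LinearMap.proj c.1 ∘ₗ L ∘ₗ LinearMap.funLeft F F (·, i)

theorem tensorEncode_apply (L : (P → F) →ₗ[F] (B → F)) (E : (ι → F) →ₗ[F] (κ → F))
    (x : P × ι → F) (β : B) (c : κ) :
    tensorEncode L E x (β, c) = E (fun i => L (fun p => x (p, i)) β) c :=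
  rfl

/-- The at most `k` requests reading a given coordinate `β` of `L` are served by the copy of `C`
in the row `{β} × κ`. -/
def tensor (C : BatchCode F ι κ k) (L : (P → F) →ₗ[F] (B → F)) (e : P → B)
    (he : ∀ y p, L y (e p) = y p) (hL : ServesWithLoad L K k) :
    BatchCode F (P × ι) (B × κ) K where
  encode := tensorEncode L C.encode
  embed pi := (e pi.1, C.embed pi.2)
  encode_embed x pi := by simp [tensorEncode_apply, C.encode_embed, he]
  batch req := by
    classical
    obtain ⟨S, hload, hS⟩ := hL fun a => (req a).1
    choose R hdisj hrec using fun β =>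
      C.exists_recovering {a | β ∈ S a} (hload β) fun a => (req a).2
    refine ⟨fun a => (S a).biUnion fun β => (R β a).map (.sectR β κ), fun a b hab => ?_,
      fun a x x' h => ?_⟩
    · rw [onFun, disjoint_left]
      rintro ⟨β, c⟩ ha hb
      simp only [mem_biUnion, mem_map, Embedding.sectR_apply, Prod.mk.injEq] at ha hb
      obtain ⟨_, hβa, _, hca, rfl, rfl⟩ := ha
      obtain ⟨_, hβb, _, hcb, rfl, rfl⟩ := hb
      exact disjoint_left.mp (hdisj _ (by simpa using hβa) (by simpa using hβb) hab) hca hcb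
    · refine hS a (fun p => x (p, (req a).2)) (fun p => x' (p, (req a).2)) fun β hβ => ?_
      refine hrec β a (by simpa using hβ) (fun i => L (fun p => x (p, i)) β)
        (fun i => L (fun p => x' (p, i)) β) fun c hc => ?_
      exact h (β, c) (mem_biUnion.mpr ⟨β, hβ, mem_map_of_mem _ hc⟩)

end BatchCode

end Codes

theorem BatchCode.existsBatchCode {F : Type} [Field F] {n N k : ℕ}
    (C : BatchCode F (Fin n) (Fin N) k) : ExistsBatchCode F N n k := by
  have hle : n ≤ N := by simpa using Fintype.card_le_of_injective _ C.embed_injective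
  obtain ⟨σ, hσ⟩ := Equiv.Perm.exists_extending_pair C.embed (Fin.castLE hle)
    C.embed_injective (Fin.castLE_injective hle)
  let C' := C.reindex σ
  have hsys : ∀ x i, C'.encode x (Fin.castLE hle i) = x i := fun x i => by
    rw [← hσ]; exact C'.encode_embed x i
  exact ⟨hle, C'.encode, fun x x' h => funext fun i => by rw [← hsys x, h, hsys], hsys, C'.batch⟩

section LineCode

variable (𝕂 F : Type*) [Field 𝕂] [Fintype 𝕂] [Field F]

/-- The coordinates are the points of the plane `𝕂²` and the non-vertical lines `y = α * x + b`,
indexed by `(α, b)`; a line coordinate holds the sum of the values on its points. -/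
def lineCode : (𝕂 × 𝕂 → F) →ₗ[F] ((𝕂 × 𝕂) ⊕ (𝕂 × 𝕂) → F) :=
  LinearMap.pi <| Sum.elim LinearMap.proj fun ℓ => ∑ u, LinearMap.proj (u, ℓ.1 * u + ℓ.2)

variable {𝕂 F}

@[simp]
theorem lineCode_inl (y : 𝕂 × 𝕂 → F) (p : 𝕂 × 𝕂) : lineCode 𝕂 F y (.inl p) = y p :=
  rfl

@[simp]
theorem lineCode_inr (y : 𝕂 × 𝕂 → F) (ℓ : 𝕂 × 𝕂) :
    lineCode 𝕂 F y (.inr ℓ) = ∑ u, y (u, ℓ.1 * u + ℓ.2) := by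
  simp [lineCode]

theorem isRecoveringSet_lineCode_singleton (p : 𝕂 × 𝕂) :
    IsRecoveringSet (lineCode 𝕂 F) {.inl p} p :=
  fun _ _ h => h _ (mem_singleton_self _)

open scoped Classical in
/-- The line through `p` with slope `α`, and every point on it other than `p`. -/
noncomputable def lineSet (p : 𝕂 × 𝕂) (α : 𝕂) : Finset ((𝕂 × 𝕂) ⊕ (𝕂 × 𝕂)) :=
  insert (.inr (α, p.2 - α * p.1))
    ((univ.erase p.1).image fun u => .inl (u, α * u + (p.2 - α * p.1)))

theorem isRecoveringSet_lineSet (p : 𝕂 × 𝕂) (α : 𝕂) :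
    IsRecoveringSet (lineCode 𝕂 F) (lineSet p α) p := by
  classical
  intro x x' h
  set b := p.2 - α * p.1
  have hp : ((p.1, α * p.1 + b) : 𝕂 × 𝕂) = p := by ext <;> simp [b]
  have hline : ∑ u, x (u, α * u + b) = ∑ u, x' (u, α * u + b) := by
    simpa using h (.inr (α, b)) (by simp [lineSet, b])
  have hrest : ∑ u ∈ univ.erase p.1, x (u, α * u + b) = ∑ u ∈ univ.erase p.1, x' (u, α * u + b) :=
    sum_congr rfl fun u hu => by simpa using h (.inl _) (by simp [lineSet, b, ne_of_mem_erase hu])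
  rw [← add_sum_erase _ _ (mem_univ p.1), ← add_sum_erase _ _ (mem_univ p.1), hrest, hp] at hline
  exact add_right_cancel hline

theorem eq_of_mem_lineSet {p : 𝕂 × 𝕂} {α α' : 𝕂} {β : (𝕂 × 𝕂) ⊕ (𝕂 × 𝕂)}
    (h : β ∈ lineSet p α) (h' : β ∈ lineSet p α') : α = α' := by
  simp only [lineSet, mem_insert, mem_image, mem_erase, mem_univ, and_true] at h h'
  rcases h with rfl | ⟨u, hu, rfl⟩ <;> rcases h' with h' | ⟨u', hu', h'⟩
  · simp_all
  · simp at h'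
  · simp at h'
  · simp only [Sum.inl.injEq, Prod.mk.injEq] at h'
    obtain ⟨rfl, h'⟩ := h'
    have : (α - α') * (u' - p.1) = 0 := by linear_combination -h'
    simpa [sub_eq_zero, hu] using this

end LineCode

section Schedule

variable {𝕂 : Type*} [Field 𝕂] [Fintype 𝕂] {K : ℕ} (k : ℕ) (req : Fin K → 𝕂 × 𝕂)
  (σ : 𝕂 × 𝕂 → Fin K → 𝕂)

open scoped Classical in
noncomputable def lineSchedule (a : Fin K) : Finset ((𝕂 × 𝕂) ⊕ (𝕂 × 𝕂)) :=
  if k / 2 < #{b | req b = req a} then lineSet (req a) (σ (req a) a) else {.inl (req a)}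

theorem isRecoveringSet_lineSchedule {F : Type*} [Field F] (a : Fin K) :
    IsRecoveringSet (lineCode 𝕂 F) (lineSchedule k req σ a) (req a) := by
  unfold lineSchedule
  split_ifs
  · exact isRecoveringSet_lineSet _ _
  · exact isRecoveringSet_lineCode_singleton _

open scoped Classical in
theorem card_lineSchedule_light_le (β : (𝕂 × 𝕂) ⊕ (𝕂 × 𝕂)) :
    #{a | β ∈ lineSchedule k req σ a ∧ #{b | req b = req a} ≤ k / 2} ≤ k / 2 := by
  set T : Finset (Fin K) := {a | β ∈ lineSchedule k req σ a ∧ #{b | req b = req a} ≤ k / 2}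
  have key : ∀ a ∈ T, β = .inl (req a) ∧ #{b | req b = req a} ≤ k / 2 := fun a ha => by
    obtain ⟨hβ, ha⟩ := (mem_filter.mp ha).2
    simpa [lineSchedule, not_lt.mpr ha, ha] using hβ
  rcases T.eq_empty_or_nonempty with h | ⟨a₀, ha₀⟩
  · simp [h]
  obtain ⟨rfl, h₀⟩ := key a₀ ha₀
  refine (card_le_card fun a ha => ?_).trans h₀
  simpa using (key a ha).1.symm

open scoped Classical in
/-- The requests for a heavy point `p` that use a given coordinate all share one slope. -/
theorem card_lineSchedule_heavy_le (β : (𝕂 × 𝕂) ⊕ (𝕂 × 𝕂)) {p : 𝕂 × 𝕂}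
    (hp : k / 2 < #{b | req b = p}) {m : ℕ} (hσ : ∀ α, #{a | req a = p ∧ σ p a = α} ≤ m) :
    #{a | β ∈ lineSchedule k req σ a ∧ req a = p} ≤ m := by
  set T : Finset (Fin K) := {a | β ∈ lineSchedule k req σ a ∧ req a = p}
  have key : ∀ a ∈ T, β ∈ lineSet p (σ p a) ∧ req a = p := fun a ha => by
    obtain ⟨hβ, rfl⟩ := (mem_filter.mp ha).2
    simpa [lineSchedule, hp] using hβ
  rcases T.eq_empty_or_nonempty with h | ⟨a₀, ha₀⟩
  · simp [h]
  refine (card_le_card fun a ha => ?_).trans (hσ (σ p a₀))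
  simpa using ⟨(key a ha).2, eq_of_mem_lineSet (key a ha).1 (key a₀ ha₀).1⟩

end Schedule

/-- Spreading the requests for each heavy point evenly over the `q` slopes, a coordinate serves
at most `k / 2` requests for a light point and about `K / q + #heavy` for heavy ones; there are
fewer than `q / 4` heavy points. -/
theorem lineCode_servesWithLoad {𝕂 : Type*} [Field 𝕂] [Fintype 𝕂] (F : Type*) [Field F]
    {K k : ℕ} (hqk : Fintype.card 𝕂 ≤ k) (hK : 8 * K ≤ Fintype.card 𝕂 * k) : ServesWithLoad (lineCode 𝕂 F) K k := by
  classical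
  intro req
  set q := Fintype.card 𝕂
  have hq : 0 < q := Fintype.card_pos
  choose σ hσ using fun p => exists_forall_card_fiber_le (β := 𝕂) {a | req a = p}
  refine ⟨lineSchedule k req σ, fun β => ?_, isRecoveringSet_lineSchedule k req σ⟩
  set S := lineSchedule k req σ
  set H : Finset (𝕂 × 𝕂) := {p | k / 2 < #{a | req a = p}}
  have hH : #H * (k / 2 + 1) ≤ K := by
    simpa using card_filter_lt_card_fiber_mul_le req (k / 2)
  have hsplit : #{a | β ∈ S a} = #{a | β ∈ S a ∧ req a ∈ H} + #{a | β ∈ S a ∧ req a ∉ H} := by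
    rw [← card_filter_add_card_filter_not (fun a => req a ∈ H), filter_filter, filter_filter]
  have hlight : #{a | β ∈ S a ∧ req a ∉ H} ≤ k / 2 := by
    simpa [H] using card_lineSchedule_light_le k req σ β
  have hfiber : ∑ p ∈ H, #{a | β ∈ S a ∧ req a = p} = #{a | β ∈ S a ∧ req a ∈ H} := by
    simpa only [filter_filter] using sum_card_fiberwise_eq_card_filter {a | β ∈ S a} H req
  have hdemand : ∑ p ∈ H, #{a | req a = p} ≤ K := by
    rw [sum_card_fiberwise_eq_card_filter]
    exact (card_le_univ _).trans_eq (Fintype.card_fin K)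
  have hheavy : q * #{a | β ∈ S a ∧ req a ∈ H} ≤ K + q * #H :=
    calc q * #{a | β ∈ S a ∧ req a ∈ H}
        ≤ ∑ p ∈ H, q * (#{a | req a = p} / q + 1) := by
          rw [← hfiber, mul_sum]
          refine sum_le_sum fun p hp => Nat.mul_le_mul_left q ?_
          exact card_lineSchedule_heavy_le k req σ β (mem_filter.mp hp).2 fun α => by
            simpa [filter_filter] using hσ p α
      _ ≤ ∑ p ∈ H, (#{a | req a = p} + q) := sum_le_sum fun p _ => by
          rw [mul_add, mul_one]; exact Nat.add_le_add_right (Nat.mul_div_le _ _) _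
      _ ≤ K + q * #H := by rw [sum_add_distrib, sum_const, smul_eq_mul, mul_comm]; omega
  have hH_lt : 8 * #H < 2 * q :=
    Nat.lt_of_mul_lt_mul_right (a := k / 2 + 1) (by nlinarith [Nat.lt_div_mul_add (a := k) two_pos])
  have h8 : 8 * #{a | β ∈ S a ∧ req a ∈ H} ≤ k + 8 * #H :=
    Nat.le_of_mul_le_mul_left (by nlinarith) hq
  convert (by omega : #{a | β ∈ S a} ≤ k)

theorem nonempty_batchCode_lineCode_iterate (𝕂 F : Type*) [Field 𝕂] [Fintype 𝕂] [Field F]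
    (d : ℕ) : ∀ j ≤ d, Nonempty (BatchCode F (Fin (Fintype.card 𝕂 ^ (2 * j)))
      (Fin (8 ^ d * Fintype.card 𝕂 * (2 * Fintype.card 𝕂 ^ 2) ^ j))
      (8 ^ (d - j) * Fintype.card 𝕂 ^ (j + 1))) := by
  set q := Fintype.card 𝕂
  have hq : 0 < q := Fintype.card_pos
  intro j
  induction j with
  | zero =>
    intro _
    have : NeZero (8 ^ d * q) := ⟨by positivity⟩
    exact ⟨((((BatchCode.id F (Fin 1)).replicate (8 ^ d * q)).restrict
      (finCongr (by simp)).toEmbedding).reindex (finProdFinEquiv.trans (finCongr (by simp)))).mono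
      (by simp)⟩
  | succ j ih =>
    intro hj
    obtain ⟨C⟩ := ih (by omega)
    have hqk : q ≤ 8 ^ (d - j) * q ^ (j + 1) :=
      (Nat.le_self_pow (by omega) q).trans (Nat.le_mul_of_pos_left _ (by positivity))
    have hK : 8 * (8 ^ (d - (j + 1)) * q ^ (j + 1 + 1)) = q * (8 ^ (d - j) * q ^ (j + 1)) := by
      rw [show d - j = d - (j + 1) + 1 by omega]
      ring
    let e₁ : Fin (q ^ (2 * (j + 1))) ≃ (𝕂 × 𝕂) × Fin (q ^ (2 * j)) :=
      Fintype.equivOfCardEq (by simp [q]; ring)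
    let e₂ : ((𝕂 × 𝕂) ⊕ (𝕂 × 𝕂)) × Fin (8 ^ d * q * (2 * q ^ 2) ^ j) ≃
        Fin (8 ^ d * q * (2 * q ^ 2) ^ (j + 1)) :=
      Fintype.equivOfCardEq (by simp [q]; ring)
    exact ⟨((C.tensor (lineCode 𝕂 F) Sum.inl lineCode_inl
      (lineCode_servesWithLoad F hqk hK.le)).restrict e₁.toEmbedding).reindex e₂⟩

theorem existsBatchCode_of_le_pow (𝕂 F : Type) [Field 𝕂] [Fintype 𝕂] [Field F] {d n : ℕ}
    (hn : n ≤ Fintype.card 𝕂 ^ (2 * d)) (M : ℕ) [NeZero M] :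
    ExistsBatchCode F (M * (8 ^ d * Fintype.card 𝕂 * (2 * Fintype.card 𝕂 ^ 2) ^ d)) n
      (M * Fintype.card 𝕂 ^ (d + 1)) := by
  obtain ⟨C⟩ := nonempty_batchCode_lineCode_iterate 𝕂 F d d le_rfl
  exact (((C.mono (by simp)).restrict (Fin.castLEEmb hn)).replicate M).reindex finProdFinEquiv
    |>.existsBatchCode

theorem exists_prime_lt_le_two_mul {x : ℝ} (hx : 1 ≤ x) :
    ∃ p : ℕ, p.Prime ∧ x < p ∧ (p : ℝ) ≤ 2 * x := by
  obtain ⟨p, hp, hlt, hle⟩ := Nat.exists_prime_lt_and_le_two_mul ⌊x⌋₊ (Nat.floor_pos.mpr hx).ne'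
  refine ⟨p, hp, (Nat.lt_floor_add_one x).trans_le (by exact_mod_cast hlt), ?_⟩
  calc (p : ℝ) ≤ 2 * ⌊x⌋₊ := by exact_mod_cast hle
    _ ≤ 2 * x := by gcongr; exact Nat.floor_le (by linarith)

section Asymptotics

variable {d n q : ℕ} (hd : 0 < d) (hn : 1 ≤ n)

include hd in
theorem le_pow_of_rpow_lt (hxq : (n : ℝ) ^ (1 / (2 * d : ℝ)) < q) : n ≤ q ^ (2 * d) := by
  have : (n : ℝ) ≤ (q : ℝ) ^ (2 * d) :=
    calc (n : ℝ) = ((n : ℝ) ^ (1 / (2 * d : ℝ))) ^ (2 * d) := by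
          rw [← Real.rpow_mul_natCast n.cast_nonneg]; push_cast; field_simp
          exact (Real.rpow_one _).symm
      _ ≤ (q : ℝ) ^ (2 * d) := pow_le_pow_left₀ (by positivity) hxq.le _
  exact_mod_cast this

include hd hn in
theorem rpow_le_ceil_mul_pow (ε : ℝ) (hxq : (n : ℝ) ^ (1 / (2 * d : ℝ)) < q) :
    (n : ℝ) ^ ε ≤ (⌈(n : ℝ) ^ (ε - 1 / 2)⌉₊ * q ^ (d + 1) : ℕ) := by
  have hn₀ : (0 : ℝ) < n := by exact_mod_cast hn
  have hq : (1 : ℝ) ≤ q := le_trans (Real.one_le_rpow (by exact_mod_cast hn) (by positivity)) hxq.le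
  have hsqrt : (n : ℝ) ^ (1 / 2 : ℝ) ≤ (q : ℝ) ^ d :=
    calc (n : ℝ) ^ (1 / 2 : ℝ) = ((n : ℝ) ^ (1 / (2 * d : ℝ))) ^ d := by
          rw [← Real.rpow_mul_natCast hn₀.le]; congr 1; field_simp
      _ ≤ (q : ℝ) ^ d := pow_le_pow_left₀ (by positivity) hxq.le d
  calc (n : ℝ) ^ ε = (n : ℝ) ^ (ε - 1 / 2) * (n : ℝ) ^ (1 / 2 : ℝ) := by
        rw [← Real.rpow_add hn₀]; ring_nf
    _ ≤ ⌈(n : ℝ) ^ (ε - 1 / 2)⌉₊ * (q : ℝ) ^ d :=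
        mul_le_mul (Nat.le_ceil _) hsqrt (by positivity) (by positivity)
    _ ≤ ⌈(n : ℝ) ^ (ε - 1 / 2)⌉₊ * (q : ℝ) ^ (d + 1) :=
        mul_le_mul_of_nonneg_left (pow_le_pow_right₀ hq d.le_succ) (by positivity)
    _ = _ := by push_cast; ring

include hd hn in
theorem ceil_mul_le_rpow {ε τ : ℝ} (hε : 1 / 2 ≤ ε) (hdτ : 1 / (2 * d : ℝ) < τ)
    (hqx : (q : ℝ) ≤ 2 * (n : ℝ) ^ (1 / (2 * d : ℝ))) :
    ((⌈(n : ℝ) ^ (ε - 1 / 2)⌉₊ * (8 ^ d * q * (2 * q ^ 2) ^ d) : ℕ) : ℝ) ≤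
      2 * 16 ^ d * 2 ^ (2 * d + 1) * (n : ℝ) ^ (0.5 + ε + τ) := by
  have hn₁ : (1 : ℝ) ≤ n := by exact_mod_cast hn
  have hn₀ : (0 : ℝ) < n := by linarith
  have hM : (⌈(n : ℝ) ^ (ε - 1 / 2)⌉₊ : ℝ) ≤ 2 * (n : ℝ) ^ (ε - 1 / 2) :=
    Nat.ceil_le_two_mul ((by norm_num : (2 : ℝ)⁻¹ ≤ 1).trans
      (Real.one_le_rpow hn₁ (by linarith)))
  have hq : (q : ℝ) ^ (2 * d + 1) ≤ 2 ^ (2 * d + 1) * (n : ℝ) ^ (1 + τ) :=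
    calc (q : ℝ) ^ (2 * d + 1) ≤ (2 * (n : ℝ) ^ (1 / (2 * d : ℝ))) ^ (2 * d + 1) :=
          pow_le_pow_left₀ (by positivity) hqx _
      _ = 2 ^ (2 * d + 1) * (n : ℝ) ^ (1 + 1 / (2 * d : ℝ)) := by
          rw [mul_pow, ← Real.rpow_mul_natCast hn₀.le]; congr 2; push_cast; field_simp
      _ ≤ 2 ^ (2 * d + 1) * (n : ℝ) ^ (1 + τ) := by
          gcongr
  calc ((⌈(n : ℝ) ^ (ε - 1 / 2)⌉₊ * (8 ^ d * q * (2 * q ^ 2) ^ d) : ℕ) : ℝ)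
      = ⌈(n : ℝ) ^ (ε - 1 / 2)⌉₊ * 16 ^ d * (q : ℝ) ^ (2 * d + 1) := by
        rw [show (16 : ℝ) ^ d = 8 ^ d * 2 ^ d by rw [← mul_pow]; norm_num]; push_cast; ring
    _ ≤ 2 * (n : ℝ) ^ (ε - 1 / 2) * 16 ^ d * (2 ^ (2 * d + 1) * (n : ℝ) ^ (1 + τ)) := by
        gcongr
    _ = 2 * 16 ^ d * 2 ^ (2 * d + 1) * (n : ℝ) ^ (0.5 + ε + τ) := by
        rw [show (0.5 : ℝ) + ε + τ = ε - 1 / 2 + (1 + τ) by norm_num; ring,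
          Real.rpow_add hn₀ (ε - 1 / 2)]
        ring

end Asymptotics

/-- For every `ε ≥ 0.5` and `τ > 0` there are constants `c₁, c₂ > 0` and
`n₀` such that for all `n ≥ n₀` there is a binary `k`-batch code `[N,n,k]` with
`k ≥ c₁·n^ε` and length `N ≤ c₂·n^(0.5+ε+τ)`. -/
theorem stmt10 (ε τ : ℝ) (hε : 0.5 ≤ ε) (hτ : 0 < τ) :
    ∃ c1 c2 : ℝ, 0 < c1 ∧ 0 < c2 ∧ ∃ n0 : ℕ, ∀ n : ℕ, n0 ≤ n →
      ∃ N k : ℕ,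
        c1 * (n : ℝ) ^ ε ≤ (k : ℝ) ∧
        (N : ℝ) ≤ c2 * (n : ℝ) ^ (0.5 + ε + τ) ∧
        ExistsBatchCode (ZMod 2) N n k := by
  obtain ⟨d, hd⟩ := exists_nat_gt (1 / (2 * τ))
  have hd₀ : 0 < d := by exact_mod_cast (show (0 : ℝ) < 1 / (2 * τ) by positivity).trans hd
  have hdτ : 1 / (2 * d : ℝ) < τ := by
    rw [div_lt_iff₀ (by positivity)] at hd ⊢; linarith
  refine ⟨1, 2 * 16 ^ d * 2 ^ (2 * d + 1), one_pos, by positivity, 1, fun n hn => ?_⟩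
  obtain ⟨q, hq, hxq, hqx⟩ := exists_prime_lt_le_two_mul
    (Real.one_le_rpow (x := n) (z := 1 / (2 * d : ℝ)) (by exact_mod_cast hn) (by positivity))
  have : Fact q.Prime := ⟨hq⟩
  have hnq := le_pow_of_rpow_lt hd₀ hxq
  have : NeZero ⌈(n : ℝ) ^ (ε - 1 / 2)⌉₊ := ⟨(Nat.ceil_pos.mpr (by positivity)).ne'⟩
  have hC := existsBatchCode_of_le_pow (ZMod q) (ZMod 2) ((ZMod.card q).symm ▸ hnq)
    ⌈(n : ℝ) ^ (ε - 1 / 2)⌉₊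
  rw [ZMod.card] at hC
  refine ⟨_, _, ?_, ?_, hC⟩
  · simpa using rpow_le_ceil_mul_pow hd₀ hn ε hxq
  · exact ceil_mul_le_rpow hd₀ hn (by norm_num at hε ⊢; exact hε) hdτ hqx
end
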